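/- Let f = f(t,x,u,p) be a smooth function of four real variables, let τ, ξ, η : ℝ³ → ℝ be smooth functions of (t,x,u) satisfying the determining equation of u_t + f(t,x,u,u_x) = 0, and let u, v : ℝ² → ℝ be smooth functions such that for every (t,x): u_t + f(t,x,u,u_x) = 0 and F*[u,v](t,x) = 0. Then the vector field with components C⁰ = (η + τ·f − ξ·u_x)·v and C¹ = (η + τ·f − ξ·u_x)·v·f_p, where τ, ξ, η are evaluated at (t,x,u(t,x)) and f, f_p at (t,x,u(t,x),u_x(t,x)), is conserved: ∂_t C⁰ + ∂_x C¹ = 0 at every (t,x). -/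

import Mathlib

noncomputable section

/-- Smoothness of a function of two real variables. -/
def Smooth2 (g : ℝ → ℝ → ℝ) : Prop :=
  ContDiff ℝ (⊤ : ℕ∞) (fun q : ℝ × ℝ => g q.1 q.2)

/-- Smoothness of a function of three real variables. -/
def Smooth3 (g : ℝ → ℝ → ℝ → ℝ) : Prop :=
  ContDiff ℝ (⊤ : ℕ∞) (fun q : ℝ × ℝ × ℝ => g q.1 q.2.1 q.2.2)

/-- Smoothness of a function of four real variables. -/
def Smooth4 (f : ℝ → ℝ → ℝ → ℝ → ℝ) : Prop :=
  ContDiff ℝ (⊤ : ℕ∞) (fun q : ℝ × ℝ × ℝ × ℝ => f q.1 q.2.1 q.2.2.1 q.2.2.2)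

/-- Partial derivatives of f = f(t,x,u,p). -/
def fT (f : ℝ → ℝ → ℝ → ℝ → ℝ) (t x u p : ℝ) : ℝ := deriv (fun s => f s x u p) t
def fX (f : ℝ → ℝ → ℝ → ℝ → ℝ) (t x u p : ℝ) : ℝ := deriv (fun s => f t s u p) x
def fU (f : ℝ → ℝ → ℝ → ℝ → ℝ) (t x u p : ℝ) : ℝ := deriv (fun s => f t x s p) u
def fP (f : ℝ → ℝ → ℝ → ℝ → ℝ) (t x u p : ℝ) : ℝ := deriv (fun s => f t x u s) p
def fXP (f : ℝ → ℝ → ℝ → ℝ → ℝ) (t x u p : ℝ) : ℝ := deriv (fun s => fP f t s u p) x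
def fUP (f : ℝ → ℝ → ℝ → ℝ → ℝ) (t x u p : ℝ) : ℝ := deriv (fun s => fP f t x s p) u
def fPP (f : ℝ → ℝ → ℝ → ℝ → ℝ) (t x u p : ℝ) : ℝ := deriv (fun s => fP f t x u s) p

/-- The adjoint expression F*[u,v](t,x) of the equation u_t + f(t,x,u,u_x) = 0:
F*[u,v] = −v_t − f_p·v_x + (f_u − f_{xp} − u_x·f_{up})·v − f_{pp}·u_{xx}·v,
with the derivatives of f evaluated at (t, x, u(t,x), u_x(t,x)). -/
def adjointExpr (f : ℝ → ℝ → ℝ → ℝ → ℝ) (u v : ℝ → ℝ → ℝ) (t x : ℝ) : ℝ :=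
  -(deriv (fun s => v s x) t)
  - fP f t x (u t x) (deriv (fun s => u t s) x) * deriv (fun s => v t s) x
  + (fU f t x (u t x) (deriv (fun s => u t s) x)
      - fXP f t x (u t x) (deriv (fun s => u t s) x)
      - deriv (fun s => u t s) x * fUP f t x (u t x) (deriv (fun s => u t s) x)) * v t x
  - fPP f t x (u t x) (deriv (fun s => u t s) x)
      * deriv (fun s => deriv (fun r => u t r) s) x * v t x

/-- Partial derivatives for functions of three real variables. -/
def pt3 (g : ℝ → ℝ → ℝ → ℝ) (t x u : ℝ) : ℝ := deriv (fun s => g s x u) t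
def px3 (g : ℝ → ℝ → ℝ → ℝ) (t x u : ℝ) : ℝ := deriv (fun s => g t s u) x
def pu3 (g : ℝ → ℝ → ℝ → ℝ) (t x u : ℝ) : ℝ := deriv (fun s => g t x s) u

/-- τ, ξ, η satisfy the determining equation of u_t + f(t,x,u,u_x) = 0. -/
def DetEq (f : ℝ → ℝ → ℝ → ℝ → ℝ) (τ ξ η : ℝ → ℝ → ℝ → ℝ) : Prop :=
  ∀ t x u p : ℝ,
    pt3 η t x u - pt3 ξ t x u * p
      + (pt3 τ t x u - pu3 η t x u + pu3 ξ t x u * p) * f t x u p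
      + ξ t x u * fX f t x u p + τ t x u * fT f t x u p + η t x u * fU f t x u p
      - pu3 τ t x u * (f t x u p) ^ 2
      + (px3 η t x u + pu3 η t x u * p - px3 ξ t x u * p - pu3 ξ t x u * p ^ 2) * fP f t x u p
      + (px3 τ t x u + pu3 τ t x u * p) * f t x u p * fP f t x u p = 0

lemma comp2 {g : ℝ → ℝ → ℝ} (hg : Smooth2 g) {a b : ℝ → ℝ} {a' b' s : ℝ}
    (ha : HasDerivAt a a' s) (hb : HasDerivAt b b' s) :
    HasDerivAt (fun r => g (a r) (b r))
      (deriv (fun z => g z (b s)) (a s) * a' + deriv (fun z => g (a s) z) (b s) * b') s := by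
  set G : ℝ × ℝ → ℝ := fun q => g q.1 q.2 with hGdef
  have hGd : ∀ q : ℝ × ℝ, HasFDerivAt G (fderiv ℝ G q) q := fun q =>
    ((hg.differentiable (by simp)) q).hasFDerivAt
  have hab : HasDerivAt (fun r => (a r, b r)) (a', b') s := ha.prodMk hb
  have H := (hGd (a s, b s)).comp_hasDerivAt s hab
  have h1 : deriv (fun z => g z (b s)) (a s) = fderiv ℝ G (a s, b s) (1, 0) := by
    have : HasDerivAt (fun z => G (z, b s)) (fderiv ℝ G (a s, b s) (1, 0)) (a s) :=
      by have h := (hGd (a s, b s)).comp_hasDerivAt (a s) ((hasDerivAt_id (a s)).prodMk (hasDerivAt_const (a s) (b s))); exact h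
    exact this.deriv
  have h2 : deriv (fun z => g (a s) z) (b s) = fderiv ℝ G (a s, b s) (0, 1) := by
    have : HasDerivAt (fun z => G (a s, z)) (fderiv ℝ G (a s, b s) (0, 1)) (b s) :=
      (hGd (a s, b s)).comp_hasDerivAt (b s) ((hasDerivAt_const _ _).prodMk (hasDerivAt_id _))
    exact this.deriv
  have hv : (a', b') = a' • ((1:ℝ), (0:ℝ)) + b' • ((0:ℝ), (1:ℝ)) := by
    simp [Prod.ext_iff]
  refine H.congr_deriv (Eq.symm ?_)
  rw [h1, h2]
  show _ = (fderiv ℝ G (a s, b s)) (a', b')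
  rw [hv, map_add, map_smul, map_smul]
  simp [mul_comm]
lemma comp3 {g : ℝ → ℝ → ℝ → ℝ} (hg : Smooth3 g) {a b c : ℝ → ℝ} {a' b' c' s : ℝ}
    (ha : HasDerivAt a a' s) (hb : HasDerivAt b b' s) (hc : HasDerivAt c c' s) :
    HasDerivAt (fun r => g (a r) (b r) (c r))
      (deriv (fun z => g z (b s) (c s)) (a s) * a'
        + deriv (fun z => g (a s) z (c s)) (b s) * b'
        + deriv (fun z => g (a s) (b s) z) (c s) * c') s := by
  set G : ℝ × ℝ × ℝ → ℝ := fun q => g q.1 q.2.1 q.2.2 with hGdef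
  have hGd : ∀ q : ℝ × ℝ × ℝ, HasFDerivAt G (fderiv ℝ G q) q := fun q =>
    ((hg.differentiable (by simp)) q).hasFDerivAt
  have hab : HasDerivAt (fun r => (a r, b r, c r)) (a', b', c') s := ha.prodMk (hb.prodMk hc)
  have H := (hGd (a s, b s, c s)).comp_hasDerivAt s hab
  have h1 : deriv (fun z => g z (b s) (c s)) (a s) = fderiv ℝ G (a s, b s, c s) (1, 0, 0) := by
    have : HasDerivAt (fun z => G (z, b s, c s)) (fderiv ℝ G (a s, b s, c s) (1, 0, 0)) (a s) :=
      (hGd _).comp_hasDerivAt _ ((hasDerivAt_id _).prodMk ((hasDerivAt_const _ _).prodMk (hasDerivAt_const _ _)))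
    exact this.deriv
  have h2 : deriv (fun z => g (a s) z (c s)) (b s) = fderiv ℝ G (a s, b s, c s) (0, 1, 0) := by
    have : HasDerivAt (fun z => G (a s, z, c s)) (fderiv ℝ G (a s, b s, c s) (0, 1, 0)) (b s) :=
      (hGd _).comp_hasDerivAt _ ((hasDerivAt_const _ _).prodMk ((hasDerivAt_id _).prodMk (hasDerivAt_const _ _)))
    exact this.deriv
  have h3 : deriv (fun z => g (a s) (b s) z) (c s) = fderiv ℝ G (a s, b s, c s) (0, 0, 1) := by
    have : HasDerivAt (fun z => G (a s, b s, z)) (fderiv ℝ G (a s, b s, c s) (0, 0, 1)) (c s) :=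
      (hGd _).comp_hasDerivAt _ ((hasDerivAt_const _ _).prodMk ((hasDerivAt_const _ _).prodMk (hasDerivAt_id _)))
    exact this.deriv
  have hv : ((a':ℝ), (b':ℝ), (c':ℝ))
      = a' • ((1:ℝ), (0:ℝ), (0:ℝ)) + b' • ((0:ℝ), (1:ℝ), (0:ℝ)) + c' • ((0:ℝ), (0:ℝ), (1:ℝ)) := by
    simp [Prod.ext_iff]
  refine H.congr_deriv (Eq.symm ?_)
  rw [h1, h2, h3]
  show _ = (fderiv ℝ G (a s, b s, c s)) (a', b', c')
  rw [hv, map_add, map_add, map_smul, map_smul, map_smul]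
  simp [mul_comm]

lemma comp4 {g : ℝ → ℝ → ℝ → ℝ → ℝ} (hg : Smooth4 g) {a b c d : ℝ → ℝ} {a' b' c' d' s : ℝ}
    (ha : HasDerivAt a a' s) (hb : HasDerivAt b b' s) (hc : HasDerivAt c c' s)
    (hd : HasDerivAt d d' s) :
    HasDerivAt (fun r => g (a r) (b r) (c r) (d r))
      (deriv (fun z => g z (b s) (c s) (d s)) (a s) * a'
        + deriv (fun z => g (a s) z (c s) (d s)) (b s) * b'
        + deriv (fun z => g (a s) (b s) z (d s)) (c s) * c'
        + deriv (fun z => g (a s) (b s) (c s) z) (d s) * d') s := by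
  set G : ℝ × ℝ × ℝ × ℝ → ℝ := fun q => g q.1 q.2.1 q.2.2.1 q.2.2.2 with hGdef
  have hGd : ∀ q : ℝ × ℝ × ℝ × ℝ, HasFDerivAt G (fderiv ℝ G q) q := fun q =>
    ((hg.differentiable (by simp)) q).hasFDerivAt
  have hab : HasDerivAt (fun r => (a r, b r, c r, d r)) (a', b', c', d') s :=
    ha.prodMk (hb.prodMk (hc.prodMk hd))
  have H := (hGd (a s, b s, c s, d s)).comp_hasDerivAt s hab
  have h1 : deriv (fun z => g z (b s) (c s) (d s)) (a s)
      = fderiv ℝ G (a s, b s, c s, d s) (1, 0, 0, 0) := by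
    have : HasDerivAt (fun z => G (z, b s, c s, d s))
        (fderiv ℝ G (a s, b s, c s, d s) (1, 0, 0, 0)) (a s) :=
      (hGd _).comp_hasDerivAt _ ((hasDerivAt_id _).prodMk ((hasDerivAt_const _ _).prodMk
        ((hasDerivAt_const _ _).prodMk (hasDerivAt_const _ _))))
    exact this.deriv
  have h2 : deriv (fun z => g (a s) z (c s) (d s)) (b s)
      = fderiv ℝ G (a s, b s, c s, d s) (0, 1, 0, 0) := by
    have : HasDerivAt (fun z => G (a s, z, c s, d s))
        (fderiv ℝ G (a s, b s, c s, d s) (0, 1, 0, 0)) (b s) :=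
      (hGd _).comp_hasDerivAt _ ((hasDerivAt_const _ _).prodMk ((hasDerivAt_id _).prodMk
        ((hasDerivAt_const _ _).prodMk (hasDerivAt_const _ _))))
    exact this.deriv
  have h3 : deriv (fun z => g (a s) (b s) z (d s)) (c s)
      = fderiv ℝ G (a s, b s, c s, d s) (0, 0, 1, 0) := by
    have : HasDerivAt (fun z => G (a s, b s, z, d s))
        (fderiv ℝ G (a s, b s, c s, d s) (0, 0, 1, 0)) (c s) :=
      (hGd _).comp_hasDerivAt _ ((hasDerivAt_const _ _).prodMk ((hasDerivAt_const _ _).prodMk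
        ((hasDerivAt_id _).prodMk (hasDerivAt_const _ _))))
    exact this.deriv
  have h4 : deriv (fun z => g (a s) (b s) (c s) z) (d s)
      = fderiv ℝ G (a s, b s, c s, d s) (0, 0, 0, 1) := by
    have : HasDerivAt (fun z => G (a s, b s, c s, z))
        (fderiv ℝ G (a s, b s, c s, d s) (0, 0, 0, 1)) (d s) :=
      (hGd _).comp_hasDerivAt _ ((hasDerivAt_const _ _).prodMk ((hasDerivAt_const _ _).prodMk
        ((hasDerivAt_const _ _).prodMk (hasDerivAt_id _))))
    exact this.deriv
  have hv : ((a':ℝ), (b':ℝ), (c':ℝ), (d':ℝ))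
      = a' • ((1:ℝ), (0:ℝ), (0:ℝ), (0:ℝ)) + b' • ((0:ℝ), (1:ℝ), (0:ℝ), (0:ℝ))
        + c' • ((0:ℝ), (0:ℝ), (1:ℝ), (0:ℝ)) + d' • ((0:ℝ), (0:ℝ), (0:ℝ), (1:ℝ)) := by
    simp [Prod.ext_iff]
  refine H.congr_deriv (Eq.symm ?_)
  rw [h1, h2, h3, h4]
  show _ = (fderiv ℝ G (a s, b s, c s, d s)) (a', b', c', d')
  rw [hv, map_add, map_add, map_add, map_smul, map_smul, map_smul, map_smul]
  simp [mul_comm]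
/-- Curried partial derivatives of a function of two variables. -/
def PT (g : ℝ → ℝ → ℝ) (a b : ℝ) : ℝ := deriv (fun s => g s b) a
def PX (g : ℝ → ℝ → ℝ) (a b : ℝ) : ℝ := deriv (fun r => g a r) b

lemma applyfd_smooth {F : ℝ × ℝ → ℝ} (hF : ContDiff ℝ (⊤ : ℕ∞) F) (w : ℝ × ℝ) :
    ContDiff ℝ (⊤ : ℕ∞) (fun q => (fderiv ℝ F q) w) :=
  (hF.fderiv_right (by simp)).clm_apply contDiff_const

lemma applyfd_smooth4 {F : ℝ × ℝ × ℝ × ℝ → ℝ} (hF : ContDiff ℝ (⊤ : ℕ∞) F) (w : ℝ × ℝ × ℝ × ℝ) :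
    ContDiff ℝ (⊤ : ℕ∞) (fun q => (fderiv ℝ F q) w) :=
  (hF.fderiv_right (by simp)).clm_apply contDiff_const

lemma mixed_symm {F : ℝ × ℝ → ℝ} (hF : ContDiff ℝ (⊤ : ℕ∞) F) (t x : ℝ) :
    deriv (fun s => fderiv ℝ F (s, x) (0, 1)) t
      = deriv (fun r => fderiv ℝ F (t, r) (1, 0)) x := by
  have hd : ∀ q : ℝ × ℝ, HasFDerivAt F (fderiv ℝ F q) q := fun q =>
    ((hF.differentiable (by simp)) q).hasFDerivAt
  have hC1 : ContDiff ℝ (⊤ : ℕ∞) (fderiv ℝ F) := hF.fderiv_right (by simp)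
  have hd2 : HasFDerivAt (fderiv ℝ F) (fderiv ℝ (fderiv ℝ F) (t, x)) (t, x) :=
    ((hC1.differentiable (by simp)) (t, x)).hasFDerivAt
  set F'' := fderiv ℝ (fderiv ℝ F) (t, x) with hF''
  have symm := second_derivative_symmetric hd hd2 ((1:ℝ), (0:ℝ)) ((0:ℝ), (1:ℝ))
  set L1 := ContinuousLinearMap.apply ℝ ℝ (((0:ℝ), (1:ℝ)) : ℝ × ℝ)
  set L2 := ContinuousLinearMap.apply ℝ ℝ (((1:ℝ), (0:ℝ)) : ℝ × ℝ)
  have s1 : HasDerivAt (fun s => fderiv ℝ F (s, x)) (F'' (1, 0)) t :=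
    hd2.comp_hasDerivAt t ((hasDerivAt_id t).prodMk (hasDerivAt_const _ _))
  have s1' : HasDerivAt (fun s => fderiv ℝ F (s, x) (0, 1)) ((F'' (1, 0)) (0, 1)) t :=
    L1.hasFDerivAt.comp_hasDerivAt t s1
  have s2 : HasDerivAt (fun r => fderiv ℝ F (t, r)) (F'' (0, 1)) x :=
    hd2.comp_hasDerivAt x ((hasDerivAt_const _ _).prodMk (hasDerivAt_id x))
  have s2' : HasDerivAt (fun r => fderiv ℝ F (t, r) (1, 0)) ((F'' (0, 1)) (1, 0)) x :=
    L2.hasFDerivAt.comp_hasDerivAt x s2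
  rw [s1'.deriv, s2'.deriv, symm]

lemma PT_eq {g : ℝ → ℝ → ℝ} (hg : Smooth2 g) (a b : ℝ) :
    PT g a b = fderiv ℝ (fun q : ℝ × ℝ => g q.1 q.2) (a, b) (1, 0) := by
  have hd := ((hg.differentiable (by simp)) (a, b)).hasFDerivAt
  have h := hd.comp_hasDerivAt a ((hasDerivAt_id a).prodMk (hasDerivAt_const a b))
  exact h.deriv

lemma PX_eq {g : ℝ → ℝ → ℝ} (hg : Smooth2 g) (a b : ℝ) :
    PX g a b = fderiv ℝ (fun q : ℝ × ℝ => g q.1 q.2) (a, b) (0, 1) := by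
  have hd := ((hg.differentiable (by simp)) (a, b)).hasFDerivAt
  have h := hd.comp_hasDerivAt b ((hasDerivAt_const b a).prodMk (hasDerivAt_id b))
  exact h.deriv

lemma smooth_PX {g : ℝ → ℝ → ℝ} (hg : Smooth2 g) : Smooth2 (PX g) := by
  have h : (fun q : ℝ × ℝ => PX g q.1 q.2)
      = fun q : ℝ × ℝ => fderiv ℝ (fun q : ℝ × ℝ => g q.1 q.2) q (0, 1) := by
    funext q; rw [PX_eq hg]
  rw [Smooth2, h]
  exact applyfd_smooth hg _

lemma mixedPartial {g : ℝ → ℝ → ℝ} (hg : Smooth2 g) (t x : ℝ) :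
    PT (PX g) t x = PX (PT g) t x := by
  have e1 : (fun s => PX g s x) = fun s => fderiv ℝ (fun q : ℝ × ℝ => g q.1 q.2) (s, x) (0, 1) :=
    funext fun s => PX_eq hg s x
  have e2 : (fun r => PT g t r) = fun r => fderiv ℝ (fun q : ℝ × ℝ => g q.1 q.2) (t, r) (1, 0) :=
    funext fun r => PT_eq hg t r
  show deriv (fun s => PX g s x) t = deriv (fun r => PT g t r) x
  rw [e1, e2]
  exact mixed_symm hg t x

lemma fP_eq {f : ℝ → ℝ → ℝ → ℝ → ℝ} (hf : Smooth4 f) (t x z p : ℝ) :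
    fP f t x z p
      = fderiv ℝ (fun q : ℝ × ℝ × ℝ × ℝ => f q.1 q.2.1 q.2.2.1 q.2.2.2) (t, x, z, p)
          (0, 0, 0, 1) := by
  have hd := ((hf.differentiable (by simp)) (t, x, z, p)).hasFDerivAt
  have h := hd.comp_hasDerivAt p ((hasDerivAt_const p t).prodMk ((hasDerivAt_const p x).prodMk
    ((hasDerivAt_const p z).prodMk (hasDerivAt_id p))))
  exact h.deriv

lemma smooth_fP {f : ℝ → ℝ → ℝ → ℝ → ℝ} (hf : Smooth4 f) : Smooth4 (fP f) := by
  have h : (fun q : ℝ × ℝ × ℝ × ℝ => fP f q.1 q.2.1 q.2.2.1 q.2.2.2)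
      = fun q : ℝ × ℝ × ℝ × ℝ =>
          fderiv ℝ (fun q : ℝ × ℝ × ℝ × ℝ => f q.1 q.2.1 q.2.2.1 q.2.2.2) q (0, 0, 0, 1) := by
    funext q; rw [fP_eq hf]
  rw [Smooth4, h]
  exact applyfd_smooth4 hf _
lemma sliceT2 {g : ℝ → ℝ → ℝ} (hg : Smooth2 g) (t x : ℝ) :
    HasDerivAt (fun s => g s x) (PT g t x) t := by
  have h := comp2 hg (hasDerivAt_id t) (hasDerivAt_const t x)
  simpa [PT] using h

lemma sliceX2 {g : ℝ → ℝ → ℝ} (hg : Smooth2 g) (t x : ℝ) :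
    HasDerivAt (fun s => g t s) (PX g t x) x := by
  have h := comp2 hg (hasDerivAt_const x t) (hasDerivAt_id x)
  simpa [PX] using h

lemma sliceT3 {g : ℝ → ℝ → ℝ → ℝ} (hg : Smooth3 g) {c : ℝ → ℝ} {c' t : ℝ} (x : ℝ)
    (hc : HasDerivAt c c' t) :
    HasDerivAt (fun s => g s x (c s)) (pt3 g t x (c t) + pu3 g t x (c t) * c') t := by
  have h := comp3 hg (hasDerivAt_id t) (hasDerivAt_const t x) hc
  simpa [pt3, pu3] using h

lemma sliceX3 {g : ℝ → ℝ → ℝ → ℝ} (hg : Smooth3 g) {c : ℝ → ℝ} {c' x : ℝ} (t : ℝ)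
    (hc : HasDerivAt c c' x) :
    HasDerivAt (fun s => g t s (c s)) (px3 g t x (c x) + pu3 g t x (c x) * c') x := by
  have h := comp3 hg (hasDerivAt_const x t) (hasDerivAt_id x) hc
  simpa [px3, pu3] using h

lemma sliceT4 {g : ℝ → ℝ → ℝ → ℝ → ℝ} (hg : Smooth4 g) {c d : ℝ → ℝ} {c' d' t : ℝ} (x : ℝ)
    (hc : HasDerivAt c c' t) (hd : HasDerivAt d d' t) :
    HasDerivAt (fun s => g s x (c s) (d s))
      (fT g t x (c t) (d t) + fU g t x (c t) (d t) * c' + fP g t x (c t) (d t) * d') t := by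
  have h := comp4 hg (hasDerivAt_id t) (hasDerivAt_const t x) hc hd
  simpa [fT, fU, fP] using h

lemma sliceX4 {g : ℝ → ℝ → ℝ → ℝ → ℝ} (hg : Smooth4 g) {c d : ℝ → ℝ} {c' d' x : ℝ} (t : ℝ)
    (hc : HasDerivAt c c' x) (hd : HasDerivAt d d' x) :
    HasDerivAt (fun s => g t s (c s) (d s))
      (fX g t x (c x) (d x) + fU g t x (c x) (d x) * c' + fP g t x (c x) (d x) * d') x := by
  have h := comp4 hg (hasDerivAt_const x t) (hasDerivAt_id x) hc hd
  simpa [fX, fU, fP] using h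
theorem conservation_law_general_first_order
    (f : ℝ → ℝ → ℝ → ℝ → ℝ) (hf : Smooth4 f)
    (τ ξ η : ℝ → ℝ → ℝ → ℝ) (hτ : Smooth3 τ) (hξ : Smooth3 ξ) (hη : Smooth3 η)
    (hdet : DetEq f τ ξ η)
    (u v : ℝ → ℝ → ℝ) (hu : Smooth2 u) (hv : Smooth2 v)
    (hueq : ∀ t x : ℝ,
      deriv (fun s => u s x) t + f t x (u t x) (deriv (fun s => u t s) x) = 0)
    (hveq : ∀ t x : ℝ, adjointExpr f u v t x = 0) :
    ∀ t x : ℝ,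
      deriv (fun s =>
        (η s x (u s x) + τ s x (u s x) * f s x (u s x) (deriv (fun r => u s r) x)
          - ξ s x (u s x) * deriv (fun r => u s r) x) * v s x) t
      + deriv (fun s =>
        (η t s (u t s) + τ t s (u t s) * f t s (u t s) (deriv (fun r => u t r) s)
          - ξ t s (u t s) * deriv (fun r => u t r) s) * v t s
          * fP f t s (u t s) (deriv (fun r => u t r) s)) x = 0 := by
  intro t x
  have hPXu : Smooth2 (PX u) := smooth_PX hu
  have hfP4 : Smooth4 (fP f) := smooth_fP hf
  have hPDE : ∀ a b : ℝ, PT u a b = -f a b (u a b) (PX u a b) := by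
    intro a b
    have h := hueq a b
    unfold PT PX
    linarith
  have hut' : HasDerivAt (fun s => u s x) (-f t x (u t x) (PX u t x)) t := by
    rw [← hPDE t x]; exact sliceT2 hu t x
  have hux' : HasDerivAt (fun s => u t s) (PX u t x) x := sliceX2 hu t x
  have huxx' : HasDerivAt (fun s => PX u t s) (PX (PX u) t x) x := sliceX2 hPXu t x
  have hM : HasDerivAt (fun s => PX u s x)
      (-(fX f t x (u t x) (PX u t x) + fU f t x (u t x) (PX u t x) * PX u t x
        + fP f t x (u t x) (PX u t x) * PX (PX u) t x)) t := by
    have h := sliceT2 hPXu t x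
    have hD : HasDerivAt (fun r => f t r (u t r) (PX u t r))
        (fX f t x (u t x) (PX u t x) + fU f t x (u t x) (PX u t x) * PX u t x
          + fP f t x (u t x) (PX u t x) * PX (PX u) t x) x :=
      sliceX4 hf t hux' huxx'
    have e : PT (PX u) t x
        = -(fX f t x (u t x) (PX u t x) + fU f t x (u t x) (PX u t x) * PX u t x
            + fP f t x (u t x) (PX u t x) * PX (PX u) t x) := by
      rw [mixedPartial hu t x]
      show deriv (fun r => PT u t r) x = _
      have e2 : (fun r => PT u t r) = fun r => -f t r (u t r) (PX u t r) :=
        funext fun r => hPDE t r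
      rw [e2]
      exact hD.neg.deriv
    rw [e] at h; exact h
  have H1 : HasDerivAt (fun s =>
      (η s x (u s x) + τ s x (u s x) * f s x (u s x) (deriv (fun r => u s r) x)
        - ξ s x (u s x) * deriv (fun r => u s r) x) * v s x)
      (((pt3 η t x (u t x) + pu3 η t x (u t x) * (-f t x (u t x) (PX u t x)))
        + ((pt3 τ t x (u t x) + pu3 τ t x (u t x) * (-f t x (u t x) (PX u t x)))
            * f t x (u t x) (PX u t x)
          + τ t x (u t x) * (fT f t x (u t x) (PX u t x)
            + fU f t x (u t x) (PX u t x) * (-f t x (u t x) (PX u t x))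
            + fP f t x (u t x) (PX u t x)
              * (-(fX f t x (u t x) (PX u t x) + fU f t x (u t x) (PX u t x) * PX u t x
                  + fP f t x (u t x) (PX u t x) * PX (PX u) t x))))
        - ((pt3 ξ t x (u t x) + pu3 ξ t x (u t x) * (-f t x (u t x) (PX u t x))) * PX u t x
          + ξ t x (u t x)
            * (-(fX f t x (u t x) (PX u t x) + fU f t x (u t x) (PX u t x) * PX u t x
                + fP f t x (u t x) (PX u t x) * PX (PX u) t x)))) * v t x
      + (η t x (u t x) + τ t x (u t x) * f t x (u t x) (PX u t x)
          - ξ t x (u t x) * PX u t x) * PT v t x) t := by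
    exact (((sliceT3 hη x hut').add ((sliceT3 hτ x hut').mul (sliceT4 hf x hut' hM))).sub
      ((sliceT3 hξ x hut').mul hM)).mul (sliceT2 hv t x)
  have H2 : HasDerivAt (fun s =>
      (η t s (u t s) + τ t s (u t s) * f t s (u t s) (deriv (fun r => u t r) s)
        - ξ t s (u t s) * deriv (fun r => u t r) s) * v t s
        * fP f t s (u t s) (deriv (fun r => u t r) s))
      ((((px3 η t x (u t x) + pu3 η t x (u t x) * PX u t x)
        + ((px3 τ t x (u t x) + pu3 τ t x (u t x) * PX u t x) * f t x (u t x) (PX u t x)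
          + τ t x (u t x) * (fX f t x (u t x) (PX u t x)
            + fU f t x (u t x) (PX u t x) * PX u t x
            + fP f t x (u t x) (PX u t x) * PX (PX u) t x))
        - ((px3 ξ t x (u t x) + pu3 ξ t x (u t x) * PX u t x) * PX u t x
          + ξ t x (u t x) * PX (PX u) t x)) * v t x
        + (η t x (u t x) + τ t x (u t x) * f t x (u t x) (PX u t x)
            - ξ t x (u t x) * PX u t x) * PX v t x) * fP f t x (u t x) (PX u t x)
      + (η t x (u t x) + τ t x (u t x) * f t x (u t x) (PX u t x)
          - ξ t x (u t x) * PX u t x) * v t x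
        * (fX (fP f) t x (u t x) (PX u t x)
          + fU (fP f) t x (u t x) (PX u t x) * PX u t x
          + fP (fP f) t x (u t x) (PX u t x) * PX (PX u) t x)) x := by
    exact ((((sliceX3 hη t hux').add ((sliceX3 hτ t hux').mul (sliceX4 hf t hux' huxx'))).sub
      ((sliceX3 hξ t hux').mul huxx')).mul (sliceX2 hv t x)).mul
      (sliceX4 hfP4 t hux' huxx')
  have hadj : -(PT v t x) - fP f t x (u t x) (PX u t x) * PX v t x
      + (fU f t x (u t x) (PX u t x) - fX (fP f) t x (u t x) (PX u t x)
        - PX u t x * fU (fP f) t x (u t x) (PX u t x)) * v t x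
      - fP (fP f) t x (u t x) (PX u t x) * PX (PX u) t x * v t x = 0 := hveq t x
  have hdet' := hdet t x (u t x) (PX u t x)
  rw [H1.deriv, H2.deriv]
  linear_combination v t x * hdet'
    - (η t x (u t x) + τ t x (u t x) * f t x (u t x) (PX u t x)
        - ξ t x (u t x) * PX u t x) * hadj
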